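/- Let w be a valuation on K(X) and let w' < w be a valuation taking values in a subgroup of the value group of w. Then any φ ∈ Φ(w', w) is a key polynomial for w', and w' < [w'; φ, w(φ)] ≤ w. Moreover, for any nonzero polynomial f ∈ K[X], the equality w'(f) = w(f) holds if and only if φ ∤_{w'} f. -/

import Mathlib

namespace MLV

open Polynomial

/-- An additive valuation on a commutative ring `R` with values in `Γ ∪ {∞}`
(written additively, with the `min` convention), thought of as the restriction
to `R` of a valuation on its fraction field. -/
structure ValOn (R : Type*) [CommRing R] (Γ : Type*) [AddCommGroup Γ] [LinearOrder Γ] [IsOrderedAddMonoid Γ] where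
  toFun : R → WithTop Γ
  map_zero' : toFun 0 = ⊤
  ne_top' : ∀ f : R, f ≠ 0 → toFun f ≠ ⊤
  map_mul' : ∀ f g : R, toFun (f * g) = toFun f + toFun g
  add_min' : ∀ f g : R, min (toFun f) (toFun g) ≤ toFun (f + g)

variable {K : Type*} [Field K] {Γ : Type*} [AddCommGroup Γ] [LinearOrder Γ] [IsOrderedAddMonoid Γ]

/-- `w` (a valuation on `K(X)`, restricted to `K[X]`) extends the valuation `v` of `K`. -/
def Extends (w : ValOn (Polynomial K) Γ) (v : ValOn K Γ) : Prop :=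
  ∀ c : K, w.toFun (C c) = v.toFun c

/-- `wbar` (a valuation on `K̄(X)`) is a common extension of `w` and of `vbar`. -/
def IsCommonExt {L : Type*} [Field L] [Algebra K L]
    (wbar : ValOn (Polynomial L) Γ) (w : ValOn (Polynomial K) Γ) (vbar : ValOn L Γ) : Prop :=
  (∀ f : Polynomial K, wbar.toFun (f.map (algebraMap K L)) = w.toFun f) ∧
  (∀ c : L, wbar.toFun (C c) = vbar.toFun c)

/-- `δ(f) = max { w̄(X - α) : α ∈ K̄, f(α) = 0 }` (as an element of `WithBot (WithTop Γ)`,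
the value `⊥` corresponding to a polynomial without roots). -/
noncomputable def delta {L : Type*} [Field L] [Algebra K L]
    (wbar : ValOn (Polynomial L) Γ) (f : Polynomial K) : WithBot (WithTop Γ) :=
  (((f.map (algebraMap K L)).roots).map
    fun α => ((wbar.toFun (X - C α) : WithTop Γ) : WithBot (WithTop Γ))).sup

/-- `Q` is an abstract key polynomial for `w` (with respect to the common extension `wbar`
computing `δ`): `Q` is monic and `δ(f) < δ(Q)` for every nonzero `f` with `deg f < deg Q`. -/
def IsABKP {L : Type*} [Field L] [Algebra K L]
    (wbar : ValOn (Polynomial L) Γ) (Q : Polynomial K) : Prop :=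
  Q.Monic ∧ ∀ f : Polynomial K, f ≠ 0 → f.degree < Q.degree → delta wbar f < delta wbar Q

/-- The `Q`-truncation `w_Q` of `w`: on the `Q`-expansion `f = ∑ fᵢ Qⁱ` it equals
`min_i w(fᵢ Qⁱ)`. -/
noncomputable def truncVal (w : ValOn (Polynomial K) Γ) (Q f : Polynomial K) : WithTop Γ :=
  (Finset.range (f.natDegree + 1)).inf fun i => w.toFun ((f /ₘ Q ^ i) %ₘ Q * Q ^ i)

/-- `f ∼_u g` : `u(f - g) > u f = u g`. -/
def EquivMod (u : Polynomial K → WithTop Γ) (f g : Polynomial K) : Prop :=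
  u f < u (f - g) ∧ u f = u g

/-- `f ∣_u g` : `g ∼_u f h` for some `h`. -/
def DvdMod (u : Polynomial K → WithTop Γ) (f g : Polynomial K) : Prop :=
  ∃ h : Polynomial K, EquivMod u g (f * h)

/-- A key polynomial for `u`: monic, `u`-irreducible and `u`-minimal. -/
def IsKeyPol (u : Polynomial K → WithTop Γ) (φ : Polynomial K) : Prop :=
  φ.Monic ∧
  (∀ h q : Polynomial K, DvdMod u φ (h * q) → DvdMod u φ h ∨ DvdMod u φ q) ∧
  (∀ h : Polynomial K, h ≠ 0 → DvdMod u φ h → φ.degree ≤ h.degree)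

/-- A key polynomial for `u` of minimal degree (i.e. of degree `deg(u)`). -/
def IsMinKeyPol (u : Polynomial K → WithTop Γ) (φ : Polynomial K) : Prop :=
  IsKeyPol u φ ∧ ∀ ψ : Polynomial K, IsKeyPol u ψ → φ.degree ≤ ψ.degree

/-- `u ≤ u'` pointwise on `K[X]`. -/
def FnLe (u u' : Polynomial K → WithTop Γ) : Prop :=
  ∀ f : Polynomial K, u f ≤ u' f

/-- `u < u'` : `u ≤ u'` and `u f < u' f` for some `f`. -/
def FnLt (u u' : Polynomial K → WithTop Γ) : Prop :=
  FnLe u u' ∧ ∃ f : Polynomial K, u f < u' f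

/-- `g ∈ Φ(u, u')` : `g` is monic of minimal degree with `u g < u' g`. -/
def InPhi (u u' : Polynomial K → WithTop Γ) (g : Polynomial K) : Prop :=
  g.Monic ∧ u g < u' g ∧
  ∀ h : Polynomial K, h.Monic → u h < u' h → g.degree ≤ h.degree

/-- The value at `f` of the augmented valuation `[u; φ, γ]`, computed via the
`φ`-expansion `f = ∑ fᵢ φⁱ` as `min_i (u fᵢ + i γ)`. -/
noncomputable def augVal (u : Polynomial K → WithTop Γ) (φ : Polynomial K) (γ : Γ)
    (f : Polynomial K) : WithTop Γ :=
  (Finset.range (f.natDegree + 1)).inf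
    fun i => u ((f /ₘ φ ^ i) %ₘ φ) + i • ((γ : WithTop Γ))

/-- `u' = [u; φ, γ]` is the ordinary augmentation of `u` at the key polynomial `φ`
with value `γ > u φ`. -/
def IsOrdAug (u : Polynomial K → WithTop Γ) (φ : Polynomial K) (γ : Γ)
    (u' : Polynomial K → WithTop Γ) : Prop :=
  IsKeyPol u φ ∧ u φ < (γ : WithTop Γ) ∧ ∀ f : Polynomial K, u' f = augVal u φ γ f

/-- A continuous family of augmentations `(ρ_i = [w'; χ_i, γ_i])_{i ∈ ι}` of `w'`. -/
structure ContFamily (w' : ValOn (Polynomial K) Γ) (ι : Type*) [LinearOrder ι] where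
  chi : ι → Polynomial K
  gam : ι → Γ
  rho : ι → ValOn (Polynomial K) Γ
  no_last : ∀ i : ι, ∃ j : ι, i < j
  gam_mono : StrictMono gam
  aug : ∀ i : ι, IsOrdAug w'.toFun (chi i) (gam i) (rho i).toFun
  deg_eq : ∀ i j : ι, (chi i).degree = (chi j).degree
  key_step : ∀ i j : ι, i < j → IsKeyPol (rho i).toFun (chi j)
  not_equiv : ∀ i j : ι, i < j → ¬ EquivMod (rho i).toFun (chi j) (chi i)
  step : ∀ i j : ι, i < j → IsOrdAug (rho i).toFun (chi j) (gam j) (rho j).toFun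

/-- `f` is `W`-stable with stable value `c`. -/
def StableAt {w' : ValOn (Polynomial K) Γ} {ι : Type*} [LinearOrder ι]
    (F : ContFamily w' ι) (f : Polynomial K) (c : WithTop Γ) : Prop :=
  ∃ i0 : ι, ∀ i : ι, i0 ≤ i → (F.rho i).toFun f = c

/-- `f` is `W`-stable. -/
def IsStable {w' : ValOn (Polynomial K) Γ} {ι : Type*} [LinearOrder ι]
    (F : ContFamily w' ι) (f : Polynomial K) : Prop :=
  ∃ c : WithTop Γ, StableAt F f c

/-- The valuation `w` is the stable limit of the family `F`. -/
def IsStableLimit {w' : ValOn (Polynomial K) Γ} {ι : Type*} [LinearOrder ι]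
    (F : ContFamily w' ι) (w : ValOn (Polynomial K) Γ) : Prop :=
  ∀ f : Polynomial K, StableAt F f (w.toFun f)

/-- `Q` is a MacLane–Vaquié limit key polynomial for `F`: monic, `F`-unstable,
of minimal degree among unstable polynomials. -/
def IsLimitKP {w' : ValOn (Polynomial K) Γ} {ι : Type*} [LinearOrder ι]
    (F : ContFamily w' ι) (Q : Polynomial K) : Prop :=
  Q.Monic ∧ ¬ IsStable F Q ∧ ∀ g : Polynomial K, ¬ IsStable F g → Q.degree ≤ g.degree

/-- The continuous family `F` is essential: `deg(W) < m_∞ < ∞`. -/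
def IsEssential {w' : ValOn (Polynomial K) Γ} {ι : Type*} [LinearOrder ι]
    (F : ContFamily w' ι) : Prop :=
  (∃ f : Polynomial K, ¬ IsStable F f) ∧
  ∀ (i : ι) (f : Polynomial K), ¬ IsStable F f → (F.chi i).degree < f.degree

/-- `w = [F; Q, γ]` is the limit augmentation of the family `F` at the limit key
polynomial `Q` with value `γ`: on `Q`-expansions, `w f = min_i (ρ_W(fᵢ) + iγ)`, which
since the coefficients are stable is the eventual value of `[ρ_i; Q, γ]` on `f`. -/
def IsLimitAug {w' : ValOn (Polynomial K) Γ} {ι : Type*} [LinearOrder ι]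
    (F : ContFamily w' ι) (Q : Polynomial K) (γ : Γ)
    (w : ValOn (Polynomial K) Γ) : Prop :=
  IsLimitKP F Q ∧ (∀ i : ι, (F.rho i).toFun Q < (γ : WithTop Γ)) ∧
  ∀ f : Polynomial K, ∃ i0 : ι, ∀ i : ι, i0 ≤ i → w.toFun f = augVal (F.rho i).toFun Q γ f

/-- `w` is a depth-zero valuation `w_{α,δ}` over `v`. -/
def IsDepthZero (v : ValOn K Γ) (w : ValOn (Polynomial K) Γ) : Prop :=
  ∃ (α : K) (d : Γ), ∀ f : Polynomial K,
    w.toFun f = (Finset.range (f.natDegree + 1)).inf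
      fun i => v.toFun (((Polynomial.taylor α) f).coeff i) + i • ((d : WithTop Γ))

/-- An ordinary augmentation step of a MacLane–Vaquié chain:
`u' = [u; φ, γ]` with `deg(u) < deg Φ(u, u')`. -/
def OrdMLVStep (u u' : Polynomial K → WithTop Γ) (φ : Polynomial K) (γ : Γ) : Prop :=
  IsOrdAug u φ γ u' ∧
  ∀ ψ g : Polynomial K, IsMinKeyPol u ψ → InPhi u u' g → ψ.degree < g.degree

/-- A limit augmentation step of a MacLane–Vaquié chain, with the underlying essential
continuous family `F` made explicit: `w = [F; φ, γ]`, `deg(w') = deg Φ(w', w)` and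
`φprev ∉ Φ(w', w)`. -/
def LimMLVStepWith {w' : ValOn (Polynomial K) Γ} {ι : Type*} [LinearOrder ι]
    (F : ContFamily w' ι) (w : ValOn (Polynomial K) Γ)
    (φprev φ : Polynomial K) (γ : Γ) : Prop :=
  IsEssential F ∧ IsLimitAug F φ γ w ∧
  (∀ ψ g : Polynomial K, IsMinKeyPol w'.toFun ψ → InPhi w'.toFun w.toFun g →
    ψ.degree = g.degree) ∧
  ¬ InPhi w'.toFun w.toFun φprev

/-- A limit augmentation step of a MacLane–Vaquié chain (the underlying essential
continuous family being existentially quantified). -/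
def LimMLVStep (w' w : ValOn (Polynomial K) Γ) (φprev φ : Polynomial K) (γ : Γ) : Prop :=
  ∃ (ι : Type) (li : LinearOrder ι) (F : @ContFamily K _ Γ _ _ _ w' ι li),
    @LimMLVStepWith K _ Γ _ _ _ w' ι li F w φprev φ γ

/-- Membership in the index set `I`: `I = ℕ` if `o = none`, and `I = {0, …, N}`
if `o = some N`. -/
def InIdx (o : Option ℕ) (j : ℕ) : Prop :=
  ∀ N : ℕ, o = some N → j ≤ N

/-- An induced complete sequence `{Q_i}_{i ∈ Δ}` of abstract key polynomials for `w`: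
a complete sequence of ABKPs, organized in blocks `Δ_j = {j} ∪ ϑ_j` (for `j` in
`I = {0,…,N}` or `I = ℕ`), satisfying the properties of Remark 1.3.  Here `blk i`
is the block of an index `i ∈ Δ`, `main j ∈ Δ` is the distinguished first element
of the block `Δ_j`, and `ϑ_j = {i ∈ Δ | blk i = j, i ≠ main j}`. -/
structure ICS {L : Type*} [Field L] [Algebra K L]
    (wbar : ValOn (Polynomial L) Γ) (w : ValOn (Polynomial K) Γ)
    (Δ : Type*) [LinearOrder Δ] where
  Q : Δ → Polynomial K
  abkp : ∀ i : Δ, IsABKP wbar (Q i)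
  wf : WellFoundedLT Δ
  delta_mono : ∀ i i' : Δ, i < i' → delta wbar (Q i) < delta wbar (Q i')
  wval_mono : ∀ i i' : Δ, i < i' → w.toFun (Q i) < w.toFun (Q i')
  complete : ∀ f : Polynomial K, f ≠ 0 →
    ∃ i : Δ, (Q i).degree ≤ f.degree ∧ truncVal w (Q i) f = w.toFun f
  Ifin : Option ℕ
  blk : Δ → ℕ
  main : ℕ → Δ
  blk_mono : ∀ i i' : Δ, i ≤ i' → blk i ≤ blk i'
  blk_mem : ∀ i : Δ, InIdx Ifin (blk i)
  blk_main : ∀ j : ℕ, InIdx Ifin j → blk (main j) = j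
  main_min : ∀ (j : ℕ) (i : Δ), blk i = j → main j ≤ i
  theta_no_last : ∀ i : Δ, i ≠ main (blk i) →
    ∃ i' : Δ, blk i' = blk i ∧ i' ≠ main (blk i) ∧ i < i'
  deg_blk_eq : ∀ i i' : Δ, blk i = blk i' → (Q i).degree = (Q i').degree
  deg_blk_lt : ∀ i i' : Δ, blk i < blk i' → (Q i).degree < (Q i').degree
  degQ0 : (Q (main 0)).degree = 1


/-! Minimality of `deg φ` forces `w' = w` on polynomials of degree `< deg φ` (such a polynomial
is a unit times a monic one). Writing `f = f %ₘ φ + φ * (f /ₘ φ)`, the strict inequality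
`w' f < w f` can therefore only come from the multiple of `φ`, which yields
`f ∼_{w'} φ * (f /ₘ φ)`; conversely `φ ∣_{w'} f` forces `w' f < w f` because `w' φ < w φ`.
Thus `φ ∣_{w'} f` iff `w' f < w f`, and `w'`-irreducibility and `w'`-minimality of `φ` follow
from multiplicativity. The same dichotomy shows that `w' f` is at most the `w'`-value of every
term of the `φ`-expansion of `f`, whence `w' ≤ [w'; φ, w φ]`; and `[w'; φ, w φ] ≤ w` because
`w'` and `w` agree on the expansion coefficients. -/

namespace ValOn

variable {R : Type*} [CommRing R] {Γ : Type*} [AddCommGroup Γ] [LinearOrder Γ]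
  [IsOrderedAddMonoid Γ]

lemma map_mul_lt_of_lt {u u' : ValOn R Γ} (hle : ∀ f, u.toFun f ≤ u'.toFun f) {f g : R}
    (hf : u.toFun f < u'.toFun f) (hg : g ≠ 0) : u.toFun (f * g) < u'.toFun (f * g) := by
  rw [u.map_mul', u'.map_mul']
  exact WithTop.add_lt_add_of_lt_of_le (u.ne_top' g hg) hf (hle g)

lemma lt_or_lt_of_map_mul_lt {u u' : ValOn R Γ} {f g : R}
    (hlt : u.toFun (f * g) < u'.toFun (f * g)) :
    u.toFun f < u'.toFun f ∨ u.toFun g < u'.toFun g := by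
  by_contra! hge
  rw [u.map_mul', u'.map_mul'] at hlt
  exact (add_le_add hge.1 hge.2).not_gt hlt

lemma map_one [Nontrivial R] (u : ValOn R Γ) : u.toFun 1 = 0 := by
  have h : u.toFun 1 + u.toFun 1 = u.toFun 1 + 0 := by rw [← u.map_mul', mul_one, add_zero]
  exact (add_right_inj_of_ne_top (u.ne_top' 1 one_ne_zero)).mp h

variable [Nontrivial R] (u : ValOn R Γ)

def toAddValuation : AddValuation R (WithTop Γ) :=
  AddValuation.of u.toFun u.map_zero' u.map_one u.add_min' u.map_mul'

lemma map_neg (f : R) : u.toFun (-f) = u.toFun f :=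
  u.toAddValuation.map_neg f

lemma map_sub (f g : R) : min (u.toFun f) (u.toFun g) ≤ u.toFun (f - g) :=
  u.toAddValuation.map_sub f g

lemma map_add_eq_of_lt_left {f g : R} (h : u.toFun f < u.toFun g) :
    u.toFun (f + g) = u.toFun f :=
  u.toAddValuation.map_add_eq_of_lt_left h

lemma map_pow (f : R) (n : ℕ) : u.toFun (f ^ n) = n • u.toFun f :=
  u.toAddValuation.map_pow f n

lemma finset_inf_le_map_sum {ι : Type*} (s : Finset ι) (g : ι → R) :
    s.inf (fun i => u.toFun (g i)) ≤ u.toFun (∑ i ∈ s, g i) :=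
  u.toAddValuation.map_le_sum fun _ hi => Finset.inf_le hi

variable {u} {u' : ValOn R Γ}

lemma map_eq_of_isUnit (hle : ∀ f, u.toFun f ≤ u'.toFun f) {a : R} (ha : IsUnit a) :
    u.toFun a = u'.toFun a := by
  obtain ⟨b, hab⟩ := ha.exists_right_inv
  have hb : b ≠ 0 := right_ne_zero_of_mul_eq_one hab
  have hsum (v : ValOn R Γ) : v.toFun a + v.toFun b = 0 := by rw [← v.map_mul', hab, v.map_one]
  refine (hle a).antisymm (not_lt.mp fun hlt => ?_)
  have := WithTop.add_lt_add_of_lt_of_le (u.ne_top' b hb) hlt (hle b)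
  rw [hsum, hsum] at this
  exact this.false

end ValOn

section Expansion

open Finset

variable {R : Type*} [CommRing R]

lemma divByMonic_mul_eq {p q : R[X]} (hp : p.Monic) (hq : q.Monic) (f : R[X]) :
    f /ₘ (p * q) = f /ₘ p /ₘ q := by
  nontriviality R
  refine (div_modByMonic_unique (f /ₘ p /ₘ q) (p * (f /ₘ p %ₘ q) + f %ₘ p) (hp.mul hq)
    ⟨?_, ?_⟩).1
  · calc p * (f /ₘ p %ₘ q) + f %ₘ p + p * q * (f /ₘ p /ₘ q)
          = f %ₘ p + p * (f /ₘ p %ₘ q + q * (f /ₘ p /ₘ q)) := by ring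
      _ = f := by rw [modByMonic_add_div, modByMonic_add_div]
  · have hlow : (p * (f /ₘ p %ₘ q)).degree < (p * q).degree := by
      rw [hp.degree_mul_comm, hp.degree_mul, hq.degree_mul, add_comm]
      exact WithBot.add_lt_add_left (degree_ne_bot.mpr hp.ne_zero)
        (degree_modByMonic_lt _ hq)
    have hrem : (f %ₘ p).degree < (p * q).degree :=
      (degree_modByMonic_lt f hp).trans_le <| by
        rw [hq.degree_mul]; exact le_add_of_nonneg_right (zero_le_degree_iff.mpr hq.ne_zero)
    exact (degree_add_le _ _).trans_lt (max_lt hlow hrem)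

variable {φ : R[X]}

lemma sum_expansion_add_divByMonic_pow (hφ : φ.Monic) (f : R[X]) (n : ℕ) :
    ∑ i ∈ range n, f /ₘ φ ^ i %ₘ φ * φ ^ i + f /ₘ φ ^ n * φ ^ n = f := by
  induction n with
  | zero => simp [divByMonic_one]
  | succ n ih =>
    rw [sum_range_succ, pow_succ, divByMonic_mul_eq (hφ.pow n) hφ]
    conv_rhs => rw [← ih, ← modByMonic_add_div (f /ₘ φ ^ n) φ]
    ring

lemma divByMonic_pow_eq_zero [Nontrivial R] (hφ : φ.Monic) (hdeg : 0 < φ.degree) {f : R[X]}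
    {n : ℕ} (hn : f.natDegree < n) : f /ₘ φ ^ n = 0 := by
  rw [divByMonic_eq_zero_iff (hφ.pow n)]
  refine (degree_le_natDegree.trans_lt (WithBot.coe_lt_coe.mpr hn)).trans_le ?_
  rw [degree_eq_natDegree (hφ.pow n).ne_zero, hφ.natDegree_pow]
  exact WithBot.coe_le_coe.mpr <|
    Nat.le_mul_of_pos_right n (natDegree_pos_iff_degree_pos.mpr hdeg)

lemma sum_expansion [Nontrivial R] (hφ : φ.Monic) (hdeg : 0 < φ.degree) (f : R[X]) :
    ∑ i ∈ range (f.natDegree + 1), f /ₘ φ ^ i %ₘ φ * φ ^ i = f := by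
  have := sum_expansion_add_divByMonic_pow hφ f (f.natDegree + 1)
  rwa [divByMonic_pow_eq_zero hφ hdeg (Nat.lt_succ_self _), zero_mul, add_zero] at this

end Expansion

section Phi

variable {K : Type*} [Field K] {Γ : Type*} [AddCommGroup Γ] [LinearOrder Γ]
  [IsOrderedAddMonoid Γ] {w' w : ValOn K[X] Γ} {φ f : K[X]}

lemma DvdMod.ne_zero (hd : DvdMod w'.toFun φ f) : f ≠ 0 := by
  rintro rfl
  obtain ⟨_, hlt, -⟩ := hd
  exact not_top_lt (w'.map_zero' ▸ hlt)

lemma DvdMod.toFun_lt (hle : FnLe w'.toFun w.toFun) (hφ : w'.toFun φ < w.toFun φ)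
    (hd : DvdMod w'.toFun φ f) : w'.toFun f < w.toFun f := by
  have hf := hd.ne_zero
  obtain ⟨h, hsub, hval⟩ := hd
  have hh : h ≠ 0 := by
    rintro rfl
    exact w'.ne_top' f hf (by rw [hval, mul_zero, w'.map_zero'])
  calc w'.toFun f < min (w.toFun (f - φ * h)) (w.toFun (φ * h)) :=
        lt_min (hsub.trans_le (hle _)) (hval ▸ ValOn.map_mul_lt_of_lt hle hφ hh)
    _ ≤ w.toFun f := by simpa using w.add_min' (f - φ * h) (φ * h)

namespace InPhi

lemma degree_pos (hφ : InPhi w'.toFun w.toFun φ) : 0 < φ.degree := by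
  refine natDegree_pos_iff_degree_pos.mp (Nat.pos_of_ne_zero fun h => ?_)
  have h1 := hφ.2.1
  rw [hφ.1.natDegree_eq_zero.mp h, w'.map_one, w.map_one] at h1
  exact h1.false

lemma toFun_eq_of_degree_lt (hle : FnLe w'.toFun w.toFun) (hφ : InPhi w'.toFun w.toFun φ)
    (hf : f.degree < φ.degree) : w'.toFun f = w.toFun f := by
  rcases eq_or_ne f 0 with rfl | hf0
  · rw [w'.map_zero', w.map_zero']
  set c := f.leadingCoeff
  have hc : c ≠ 0 := leadingCoeff_ne_zero.mpr hf0
  have hmonic : w'.toFun (f * C c⁻¹) = w.toFun (f * C c⁻¹) :=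
    (hle _).antisymm <| not_lt.mp fun hlt =>
      (hφ.2.2 _ (monic_mul_leadingCoeff_inv hf0) hlt).not_gt
        (by rwa [degree_mul_leadingCoeff_inv f hf0])
  have hunit : w'.toFun (C c) = w.toFun (C c) :=
    ValOn.map_eq_of_isUnit hle (isUnit_C.mpr hc.isUnit)
  have hf_eq : f = f * C c⁻¹ * C c := by
    rw [mul_assoc, ← C_mul, inv_mul_cancel₀ hc, C_1, mul_one]
  rw [hf_eq, w'.map_mul', w.map_mul', hmonic, hunit]

lemma dvdMod_of_toFun_lt (hle : FnLe w'.toFun w.toFun) (hφ : InPhi w'.toFun w.toFun φ)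
    (hlt : w'.toFun f < w.toFun f) : DvdMod w'.toFun φ f := by
  have hfe := modByMonic_add_div f φ
  have hq : f /ₘ φ ≠ 0 := fun hq =>
    hlt.ne (hφ.toFun_eq_of_degree_lt hle ((divByMonic_eq_zero_iff hφ.1).mp hq))
  have hsub : f - φ * (f /ₘ φ) = f %ₘ φ := (eq_sub_of_add_eq hfe).symm
  have hrem := hφ.toFun_eq_of_degree_lt hle (degree_modByMonic_lt f hφ.1)
  -- otherwise `w` would exceed `w'` on `f %ₘ φ = f - φ * (f /ₘ φ)`
  have key : w'.toFun (φ * (f /ₘ φ)) < w'.toFun (f %ₘ φ) := by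
    refine lt_of_not_ge fun hge => hrem.not_lt ?_
    have hf : w'.toFun (f %ₘ φ) ≤ w'.toFun f := by
      simpa [min_eq_left hge, hfe] using w'.add_min' (f %ₘ φ) (φ * (f /ₘ φ))
    calc w'.toFun (f %ₘ φ)
        < min (w.toFun f) (w.toFun (φ * (f /ₘ φ))) :=
          lt_min (hf.trans_lt hlt) (hge.trans_lt (ValOn.map_mul_lt_of_lt hle hφ.2.1 hq))
      _ ≤ w.toFun (f - φ * (f /ₘ φ)) := w.map_sub _ _
      _ = w.toFun (f %ₘ φ) := by rw [hsub]
  have hval : w'.toFun f = w'.toFun (φ * (f /ₘ φ)) := by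
    rw [← w'.map_add_eq_of_lt_left key, add_comm, hfe]
  refine ⟨f /ₘ φ, ?_, hval⟩
  rwa [hval, hsub]

lemma dvdMod_iff_toFun_lt (hle : FnLe w'.toFun w.toFun) (hφ : InPhi w'.toFun w.toFun φ) :
    DvdMod w'.toFun φ f ↔ w'.toFun f < w.toFun f :=
  ⟨fun hd => hd.toFun_lt hle hφ.2.1, hφ.dvdMod_of_toFun_lt hle⟩

lemma isKeyPol (hle : FnLe w'.toFun w.toFun) (hφ : InPhi w'.toFun w.toFun φ) :
    IsKeyPol w'.toFun φ := by
  refine ⟨hφ.1, fun g h hd => ?_, fun g _ hd => not_lt.mp fun hdeg => ?_⟩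
  · rw [hφ.dvdMod_iff_toFun_lt hle, hφ.dvdMod_iff_toFun_lt hle]
    exact ValOn.lt_or_lt_of_map_mul_lt ((hφ.dvdMod_iff_toFun_lt hle).mp hd)
  · exact ((hφ.dvdMod_iff_toFun_lt hle).mp hd).ne (hφ.toFun_eq_of_degree_lt hle hdeg)

lemma toFun_le_modByMonic (hle : FnLe w'.toFun w.toFun) (hφ : InPhi w'.toFun w.toFun φ)
    (f : K[X]) : w'.toFun f ≤ w'.toFun (f %ₘ φ) := by
  refine not_lt.mp fun hlt => ?_
  have hd : DvdMod w'.toFun φ (f %ₘ φ) := by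
    have hfe := modByMonic_add_div f φ
    have hsub : f %ₘ φ - φ * -(f /ₘ φ) = f := by linear_combination hfe
    have hmul : φ * -(f /ₘ φ) = f %ₘ φ + -f := by linear_combination -hfe
    refine ⟨-(f /ₘ φ), by rwa [hsub], ?_⟩
    rw [hmul, w'.map_add_eq_of_lt_left (by rwa [w'.map_neg])]
  exact ((hφ.dvdMod_iff_toFun_lt hle).mp hd).ne
    (hφ.toFun_eq_of_degree_lt hle (degree_modByMonic_lt f hφ.1))

lemma toFun_le_mul_divByMonic (hle : FnLe w'.toFun w.toFun) (hφ : InPhi w'.toFun w.toFun φ)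
    (f : K[X]) : w'.toFun f ≤ w'.toFun (φ * (f /ₘ φ)) := by
  have := w'.map_sub f (f %ₘ φ)
  rwa [min_eq_left (hφ.toFun_le_modByMonic hle f),
    sub_eq_of_eq_add' (modByMonic_add_div f φ).symm] at this

lemma toFun_le_expansion_term (hle : FnLe w'.toFun w.toFun) (hφ : InPhi w'.toFun w.toFun φ)
    (i : ℕ) (f : K[X]) : w'.toFun f ≤ w'.toFun (f /ₘ φ ^ i %ₘ φ * φ ^ i) := by
  induction i generalizing f with
  | zero => simpa using hφ.toFun_le_modByMonic hle f
  | succ i ih =>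
    calc w'.toFun f ≤ w'.toFun φ + w'.toFun (f /ₘ φ) :=
          w'.map_mul' φ _ ▸ hφ.toFun_le_mul_divByMonic hle f
      _ ≤ w'.toFun φ + w'.toFun (f /ₘ φ /ₘ φ ^ i %ₘ φ * φ ^ i) := by gcongr; exact ih _
      _ = w'.toFun (f /ₘ φ ^ (i + 1) %ₘ φ * φ ^ (i + 1)) := by
          rw [← w'.map_mul', pow_succ', divByMonic_mul_eq hφ.1 (hφ.1.pow i)]
          ring_nf

lemma le_augVal (hle : FnLe w'.toFun w.toFun) (hφ : InPhi w'.toFun w.toFun φ) {γ : Γ}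
    (hγ : w'.toFun φ ≤ γ) : FnLe w'.toFun (augVal w'.toFun φ γ) := fun f =>
  Finset.le_inf fun i _ => calc
    w'.toFun f ≤ w'.toFun (f /ₘ φ ^ i %ₘ φ * φ ^ i) := hφ.toFun_le_expansion_term hle i f
    _ = w'.toFun (f /ₘ φ ^ i %ₘ φ) + i • w'.toFun φ := by rw [w'.map_mul', w'.map_pow]
    _ ≤ w'.toFun (f /ₘ φ ^ i %ₘ φ) + i • (γ : WithTop Γ) := by gcongr

lemma augVal_le (hle : FnLe w'.toFun w.toFun) (hφ : InPhi w'.toFun w.toFun φ) {γ : Γ}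
    (hγ : (γ : WithTop Γ) = w.toFun φ) : FnLe (augVal w'.toFun φ γ) w.toFun := fun f => calc
  augVal w'.toFun φ γ f
      = (Finset.range (f.natDegree + 1)).inf fun i => w.toFun (f /ₘ φ ^ i %ₘ φ * φ ^ i) := by
        refine Finset.inf_congr rfl fun i _ => ?_
        rw [w.map_mul', w.map_pow, hγ,
          hφ.toFun_eq_of_degree_lt hle (degree_modByMonic_lt _ hφ.1)]
  _ ≤ w.toFun (∑ i ∈ Finset.range (f.natDegree + 1), f /ₘ φ ^ i %ₘ φ * φ ^ i) :=
        w.finset_inf_le_map_sum _ _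
  _ = w.toFun f := by rw [sum_expansion hφ.1 hφ.degree_pos]

end InPhi

lemma augVal_self (u : ValOn K[X] Γ) (hφ : φ.Monic) (hdeg : 0 < φ.degree) (γ : Γ) :
    augVal u.toFun φ γ φ = γ := by
  have hdiv : φ /ₘ φ = 1 := by simpa using mul_divByMonic_cancel_left (1 : K[X]) hφ
  have hone : (1 : K[X]) %ₘ φ = 1 := (modByMonic_eq_self_iff hφ).mpr (degree_one.trans_lt hdeg)
  have hterm : u.toFun (φ /ₘ φ ^ 1 %ₘ φ) + (1 : ℕ) • (γ : WithTop Γ) = γ := by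
    rw [pow_one, hdiv, hone, u.map_one, one_smul, zero_add]
  refine le_antisymm ?_ (Finset.le_inf fun i _ => ?_)
  · exact hterm ▸ Finset.inf_le (Finset.mem_range.mpr
      (Nat.succ_lt_succ (natDegree_pos_iff_degree_pos.mpr hdeg)))
  · match i with
    | 0 => simp [modByMonic_self hφ, u.map_zero']
    | 1 => exact hterm.ge
    | i + 2 =>
      rw [pow_succ', divByMonic_mul_eq hφ (hφ.pow _), hdiv,
        divByMonic_pow_eq_zero hφ hdeg (by simp), zero_modByMonic, u.map_zero', top_add]
      exact le_top

end Phi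

/-- Vaquié, Theorem 1.15: for valuations `w' < w` on `K(X)`, any
`φ ∈ Φ(w', w)` is a key polynomial for `w'` and `w' < [w'; φ, w(φ)] ≤ w`; moreover,
for nonzero `f`, `w'(f) = w(f)` iff `φ ∤_{w'} f`. -/
theorem inPhi_keyPol_and_augmentation_between
    {K : Type*} [Field K] {Γ : Type*} [AddCommGroup Γ] [LinearOrder Γ] [IsOrderedAddMonoid Γ]
    (w' w : ValOn (Polynomial K) Γ) (hlt : FnLt w'.toFun w.toFun)
    (φ : Polynomial K) (hφ : InPhi w'.toFun w.toFun φ) :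
    IsKeyPol w'.toFun φ ∧
    (∃ γ : Γ, (γ : WithTop Γ) = w.toFun φ ∧
      FnLt w'.toFun (augVal w'.toFun φ γ) ∧ FnLe (augVal w'.toFun φ γ) w.toFun) ∧
    ∀ f : Polynomial K, f ≠ 0 → (w'.toFun f = w.toFun f ↔ ¬ DvdMod w'.toFun φ f) := by
  have hle := hlt.1
  obtain ⟨γ, hγ⟩ := WithTop.ne_top_iff_exists.mp (w.ne_top' φ hφ.1.ne_zero)
  have hφγ : w'.toFun φ < γ := hγ ▸ hφ.2.1
  refine ⟨hφ.isKeyPol hle, ⟨γ, hγ, ⟨hφ.le_augVal hle hφγ.le, φ, ?_⟩, hφ.augVal_le hle hγ⟩,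
    fun f _ => ?_⟩
  · rwa [augVal_self w' hφ.1 hφ.degree_pos]
  · rw [hφ.dvdMod_iff_toFun_lt hle, not_lt]
    exact ⟨fun h => h.ge, (hle f).antisymm⟩

end MLV
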